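/- Every element of P_{λ|μ} (with μ_m ≤ λ_l) can be written uniquely as a block matrix [[A, 0],[C, B]] where A ∈ P_{λ̃|μ̃} (of size n - μ_m), B ∈ GL_{μ_m}(F_2), and C is a μ_m × (n - μ_m) matrix whose only nonzero columns are among the last λ_l - μ_m columns; i.e., P_{λ|μ} is in bijection with P_{λ̃|μ̃} × GL_{μ_m}(F_2) × M_{μ_m, λ_l - μ_m}(F_2). -/

import Mathlib

open Matrix

open Matrix

/-- Index of the block (w.r.t. the composition `l`) containing row/column `i`. -/
def blockIdx (l : List ℕ) (i : ℕ) : ℕ :=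
  (List.range l.length).countP (fun k => (l.take (k + 1)).sum ≤ i)

/-- The submonoid of `GL n (F₂)` of matrices that are block upper triangular w.r.t. `l`
and block lower triangular w.r.t. `m`. -/
def paraPairM (n : ℕ) (l m : List ℕ) : Submonoid (GL (Fin n) (ZMod 2)) where
  carrier := {g | (∀ i j : Fin n, blockIdx l j < blockIdx l i →
      (g : Matrix (Fin n) (Fin n) (ZMod 2)) i j = 0) ∧
    (∀ i j : Fin n, blockIdx m i < blockIdx m j →
      (g : Matrix (Fin n) (Fin n) (ZMod 2)) i j = 0)}
  one_mem' := by
    constructor <;> intro i j h <;>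
    · have : i ≠ j := by rintro rfl; omega
      simp [Matrix.one_apply_ne this]
  mul_mem' := by
    rintro a b ⟨ha1, ha2⟩ ⟨hb1, hb2⟩
    constructor
    · intro i j h
      show ((a : Matrix (Fin n) (Fin n) (ZMod 2)) * b) i j = 0
      rw [Matrix.mul_apply]
      apply Finset.sum_eq_zero
      intro k _
      rcases lt_or_ge (blockIdx l k) (blockIdx l i) with hk | hk
      · rw [ha1 i k hk, zero_mul]
      · rw [hb1 k j (lt_of_lt_of_le h hk), mul_zero]
    · intro i j h
      show ((a : Matrix (Fin n) (Fin n) (ZMod 2)) * b) i j = 0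
      rw [Matrix.mul_apply]
      apply Finset.sum_eq_zero
      intro k _
      rcases lt_or_ge (blockIdx m i) (blockIdx m k) with hk | hk
      · rw [ha2 i k hk, zero_mul]
      · rw [hb2 k j (lt_of_le_of_lt hk h), mul_zero]

/-- `P_{λ|μ} = P_λ ∩ (P_μ)ᵗ` as a subgroup of `GL n (F₂)`. -/
def paraPair (n : ℕ) (l m : List ℕ) : Subgroup (GL (Fin n) (ZMod 2)) where
  toSubmonoid := paraPairM n l m
  inv_mem' := by
    intro g hg
    have hord : g ^ orderOf g = 1 := pow_orderOf_eq_one g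
    have hpos : 0 < orderOf g := orderOf_pos g
    have hinv : g⁻¹ = g ^ (orderOf g - 1) := by
      apply inv_eq_of_mul_eq_one_right
      rw [← pow_succ']
      have h1 : orderOf g - 1 + 1 = orderOf g := by omega
      rw [h1, hord]
    rw [hinv]
    exact Submonoid.pow_mem _ hg _

/-- The standard parabolic subgroup `P_λ` of `GL n (F₂)`. -/
def para (n : ℕ) (l : List ℕ) : Subgroup (GL (Fin n) (ZMod 2)) := paraPair n l []

/-- The stopover set of a composition. -/
def stopovers (l : List ℕ) : Set ℕ :=
  {s | ∃ t, 0 < t ∧ t < l.length ∧ (l.take t).sum = s}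

/-!
Split `Fin n` as `(n - μ_m) + μ_m`. Block lower triangularity for `μ` kills the upper right
block, so `g = [[A, 0], [C, B]]` and `det g = det A * det B`; hence `A` and `B` are invertible
and, conversely, every such block matrix with invertible `A`, `B` is invertible. Since
`μ_m ≤ λ_l`, the last `μ_m` indices all lie in the last `λ`-block: removing them shortens that
block to `λ_l - μ_m`, so the conditions on `A` are exactly those of `P_{λ̃|μ̃}`, the
`λ`-condition on `C` says that its first `n - λ_l` columns vanish, and `B` is unconstrained.
-/

namespace List

theorem sum_take_le_sum (l : List ℕ) (k : ℕ) : (l.take k).sum ≤ l.sum :=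
  (l.take_sublist k).sum_le_sum fun _ _ => Nat.zero_le _

end List

section BlockIdx

variable {l : List ℕ} {i : ℕ}

theorem blockIdx_le_length (l : List ℕ) (i : ℕ) : blockIdx l i ≤ l.length :=
  List.countP_le_length.trans_eq List.length_range

theorem blockIdx_eq_length_iff : blockIdx l i = l.length ↔ l.sum ≤ i := by
  unfold blockIdx
  conv_lhs => rhs; rw [← List.length_range (n := l.length)]
  simp only [List.countP_eq_length, List.mem_range, decide_eq_true_eq]
  refine ⟨fun h => ?_, fun h k _ => (l.sum_take_le_sum _).trans h⟩
  rcases l.eq_nil_or_concat' with rfl | ⟨l', x, rfl⟩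
  · simp
  · simpa using h l'.length (by simp)

theorem blockIdx_lt_length (h : i < l.sum) : blockIdx l i < l.length :=
  (blockIdx_le_length l i).lt_of_ne (mt blockIdx_eq_length_iff.mp (not_le.mpr h))

theorem blockIdx_append_singleton {x : ℕ} (h : i < l.sum + x) :
    blockIdx (l ++ [x]) i = blockIdx l i := by
  unfold blockIdx
  rw [List.length_append, List.length_singleton, List.range_succ, List.countP_append,
    List.countP_singleton, List.take_of_length_le (by simp), List.sum_append]
  simp only [List.sum_singleton, not_le.mpr h, decide_false]
  refine List.countP_congr fun k hk => ?_
  rw [List.take_append_of_le_length (by simp at hk; omega)]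

end BlockIdx

namespace Matrix

theorem submatrix_eq_fromBlocks_of_lowerBlockTriangular {ι m n R : Type*} [Zero R]
    (G : Matrix ι ι R) (e : m ⊕ n ≃ ι)
    (h : ∀ i j, G (e (.inl i)) (e (.inr j)) = 0) :
    G.submatrix e e = fromBlocks (G.submatrix (e ∘ .inl) (e ∘ .inl)) 0
      (G.submatrix (e ∘ .inr) (e ∘ .inl)) (G.submatrix (e ∘ .inr) (e ∘ .inr)) := by
  ext (i | i) (j | j) <;> simp [h]

variable {ι m n R : Type*} [Fintype ι] [DecidableEq ι] [Fintype m] [DecidableEq m]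
  [Fintype n] [DecidableEq n] [CommRing R]

theorem det_eq_mul_of_lowerBlockTriangular (G : Matrix ι ι R) (e : m ⊕ n ≃ ι)
    (h : ∀ i j, G (e (.inl i)) (e (.inr j)) = 0) :
    G.det = (G.submatrix (e ∘ .inl) (e ∘ .inl)).det *
      (G.submatrix (e ∘ .inr) (e ∘ .inr)).det := by
  rw [← det_submatrix_equiv_self e, submatrix_eq_fromBlocks_of_lowerBlockTriangular G e h,
    det_fromBlocks_zero₁₂]

namespace GeneralLinearGroup

noncomputable def lowerBlockTriangularEquiv (e : m ⊕ n ≃ ι) :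
    {g : GL ι R // ∀ i j, (g : Matrix ι ι R) (e (.inl i)) (e (.inr j)) = 0} ≃
      GL m R × GL n R × Matrix n m R where
  toFun g :=
    have hdet := det_eq_mul_of_lowerBlockTriangular _ e g.2 ▸ isUnits_det_units g.1
    (mk'' _ (isUnit_of_mul_isUnit_left hdet), mk'' _ (isUnit_of_mul_isUnit_right hdet),
      (g.1 : Matrix ι ι R).submatrix (e ∘ .inr) (e ∘ .inl))
  invFun x :=
    ⟨mk'' ((fromBlocks x.1 0 x.2.2 x.2.1).submatrix e.symm e.symm) (by
        rw [det_submatrix_equiv_self, det_fromBlocks_zero₁₂]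
        exact (x.1.isUnit.map detMonoidHom).mul (x.2.1.isUnit.map detMonoidHom)),
      fun i j => by simp [val_mk'']⟩
  left_inv g := by
    refine Subtype.ext (Units.ext ?_)
    simp only [val_mk'']
    rw [← submatrix_eq_fromBlocks_of_lowerBlockTriangular _ e g.2, submatrix_submatrix,
      e.self_comp_symm, submatrix_id_id]
  right_inv x := by
    refine Prod.ext (Units.ext ?_) (Prod.ext (Units.ext ?_) ?_) <;> ext <;> simp [val_mk'']

end GeneralLinearGroup

noncomputable def initialColsZeroEquiv (m : Type*) {p q c : ℕ} (h : p + q = c) :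
    {C : Matrix m (Fin c) R // ∀ i (j : Fin c), (j : ℕ) < p → C i j = 0} ≃
      Matrix m (Fin q) R where
  toFun C i j := C.1 i ⟨p + j, by omega⟩
  invFun D := ⟨fun i j => if hj : p ≤ j then D i ⟨j - p, by omega⟩ else 0,
    fun _ _ hj => dif_neg (by omega)⟩
  left_inv C := by
    refine Subtype.ext (funext₂ fun i j => ?_)
    by_cases hj : p ≤ (j : ℕ)
    · simp [hj, Nat.add_sub_cancel' hj]
    · simp [hj, C.2 i j (by omega)]
  right_inv D := by
    ext i j
    simp

end Matrix

def Fin.sumSubEquiv {n b : ℕ} (h : b ≤ n) : Fin (n - b) ⊕ Fin b ≃ Fin n :=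
  finSumFinEquiv.trans (finCongr (Nat.sub_add_cancel h))

@[simp]
theorem Fin.sumSubEquiv_inl_val {n b : ℕ} (h : b ≤ n) (i : Fin (n - b)) :
    (Fin.sumSubEquiv h (.inl i) : ℕ) = i := rfl

@[simp]
theorem Fin.sumSubEquiv_inr_val {n b : ℕ} (h : b ≤ n) (j : Fin b) :
    (Fin.sumSubEquiv h (.inr j) : ℕ) = n - b + j := rfl

open OrderDual

/-- The condition defining `P_{l|m}`, over any ring; `toDual` turns block upper triangularity
into block lower triangularity for `m`. -/
def IsBlockTriangularPair {R : Type*} [Zero R] {n : ℕ} (l m : List ℕ)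
    (G : Matrix (Fin n) (Fin n) R) : Prop :=
  G.BlockTriangular (fun k => blockIdx l k) ∧ G.BlockTriangular (fun k => toDual (blockIdx m k))

theorem mem_paraPair_iff {n : ℕ} {l m : List ℕ} {g : GL (Fin n) (ZMod 2)} :
    g ∈ paraPair n l m ↔ IsBlockTriangularPair l m (g : Matrix (Fin n) (Fin n) (ZMod 2)) :=
  Iff.rfl

namespace IsBlockTriangularPair

variable {R : Type*} [Zero R] {n a b : ℕ} {L M : List ℕ} {G : Matrix (Fin n) (Fin n) R}

theorem upperRight_eq_zero (hbn : b ≤ n) (hM : M.sum = n - b)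
    (hG : IsBlockTriangularPair L (M ++ [b]) G) (i : Fin (n - b)) (j : Fin b) :
    G (Fin.sumSubEquiv hbn (.inl i)) (Fin.sumSubEquiv hbn (.inr j)) = 0 := by
  refine hG.2 (toDual_lt_toDual.mpr ?_)
  have := i.isLt
  have := j.isLt
  simp only [Fin.sumSubEquiv_inl_val, Fin.sumSubEquiv_inr_val]
  rw [blockIdx_append_singleton, blockIdx_append_singleton,
    blockIdx_eq_length_iff.mpr (show M.sum ≤ n - b + j by omega)]
  · exact blockIdx_lt_length (l := M) (by omega)
  all_goals omega

theorem lowerLeft_eq_zero (hbn : b ≤ n) (hL : L.sum + a = n) (hba : b ≤ a)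
    (hG : IsBlockTriangularPair (L ++ [a]) M G) (i : Fin b) (j : Fin (n - b))
    (hj : (j : ℕ) < n - a) :
    G (Fin.sumSubEquiv hbn (.inr i)) (Fin.sumSubEquiv hbn (.inl j)) = 0 := by
  refine hG.1 ?_
  have := i.isLt
  have := j.isLt
  simp only [Fin.sumSubEquiv_inl_val, Fin.sumSubEquiv_inr_val]
  rw [blockIdx_append_singleton, blockIdx_append_singleton,
    blockIdx_eq_length_iff.mpr (show L.sum ≤ n - b + i by omega)]
  · exact blockIdx_lt_length (l := L) (by omega)
  all_goals omega

theorem submatrix_inl (hbn : b ≤ n) (hM : M.sum = n - b) (hL : L.sum + a = n) (hba : b ≤ a)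
    (hG : IsBlockTriangularPair (L ++ [a]) (M ++ [b]) G) :
    IsBlockTriangularPair (L ++ [a - b]) M
      (G.submatrix (Fin.sumSubEquiv hbn ∘ .inl) (Fin.sumSubEquiv hbn ∘ .inl)) := by
  have hidxL : ∀ i : Fin (n - b), blockIdx (L ++ [a]) (Fin.sumSubEquiv hbn (.inl i)) =
      blockIdx (L ++ [a - b]) i := fun i => by
    have := i.isLt
    rw [Fin.sumSubEquiv_inl_val, blockIdx_append_singleton, blockIdx_append_singleton] <;> omega
  have hidxM : ∀ i : Fin (n - b), blockIdx (M ++ [b]) (Fin.sumSubEquiv hbn (.inl i)) =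
      blockIdx M i := fun i => by
    have := i.isLt
    rw [Fin.sumSubEquiv_inl_val, blockIdx_append_singleton]
    omega
  exact ⟨by simpa only [Function.comp_def, hidxL]
      using hG.1.submatrix (f := Fin.sumSubEquiv hbn ∘ .inl),
    by simpa only [Function.comp_def, hidxM]
      using hG.2.submatrix (f := Fin.sumSubEquiv hbn ∘ .inl)⟩

theorem of_blocks (hbn : b ≤ n) (hM : M.sum = n - b) (hL : L.sum + a = n) (hba : b ≤ a)
    (hZ : ∀ i j, G (Fin.sumSubEquiv hbn (.inl i)) (Fin.sumSubEquiv hbn (.inr j)) = 0)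
    (hA : IsBlockTriangularPair (L ++ [a - b]) M
      (G.submatrix (Fin.sumSubEquiv hbn ∘ .inl) (Fin.sumSubEquiv hbn ∘ .inl)))
    (hC : ∀ i (j : Fin (n - b)), (j : ℕ) < n - a →
      G (Fin.sumSubEquiv hbn (.inr i)) (Fin.sumSubEquiv hbn (.inl j)) = 0) :
    IsBlockTriangularPair (L ++ [a]) (M ++ [b]) G := by
  have hidxL : ∀ k : Fin n, blockIdx (L ++ [a]) k = blockIdx L k := fun k =>
    blockIdx_append_singleton (by omega)
  have hidxM : ∀ k : Fin n, blockIdx (M ++ [b]) k = blockIdx M k := fun k =>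
    blockIdx_append_singleton (by omega)
  have hidxL' : ∀ k : Fin (n - b), blockIdx (L ++ [a - b]) k = blockIdx L k := fun k =>
    blockIdx_append_singleton (by omega)
  have hlenL : ∀ k : Fin b, blockIdx L (Fin.sumSubEquiv hbn (.inr k)) = L.length := fun k =>
    blockIdx_eq_length_iff.mpr (by rw [Fin.sumSubEquiv_inr_val]; omega)
  have hlenM : ∀ k : Fin b, blockIdx M (Fin.sumSubEquiv hbn (.inr k)) = M.length := fun k =>
    blockIdx_eq_length_iff.mpr (by rw [Fin.sumSubEquiv_inr_val]; omega)
  constructor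
  · intro i j hij
    obtain ⟨i, rfl⟩ := (Fin.sumSubEquiv hbn).surjective i
    obtain ⟨j, rfl⟩ := (Fin.sumSubEquiv hbn).surjective j
    simp only [hidxL] at hij
    rcases i with i | i <;> rcases j with j | j
    · exact hA.1 (by simpa only [hidxL', Fin.sumSubEquiv_inl_val] using hij)
    · exact hZ i j
    · refine hC i j (not_le.mp fun hj => ?_)
      rw [blockIdx_eq_length_iff.mpr (by rw [Fin.sumSubEquiv_inl_val]; omega)] at hij
      exact (blockIdx_le_length _ _).not_gt hij
    · exact absurd hij (hlenL j ▸ (blockIdx_le_length _ _).not_gt)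
  · intro i j hij
    obtain ⟨i, rfl⟩ := (Fin.sumSubEquiv hbn).surjective i
    obtain ⟨j, rfl⟩ := (Fin.sumSubEquiv hbn).surjective j
    simp only [toDual_lt_toDual, hidxM] at hij
    rcases i with i | i
    · rcases j with j | j
      · exact hA.2 (by simpa only [toDual_lt_toDual, Fin.sumSubEquiv_inl_val] using hij)
      · exact hZ i j
    · exact absurd hij (hlenM i ▸ (blockIdx_le_length _ _).not_gt)

end IsBlockTriangularPair

def Equiv.subtypeProdProdEquiv {α β γ δ : Type*} {p : α → Prop} {q : γ → Prop}
    (f : {c // q c} ≃ δ) :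
    {x : α × β × γ // p x.1 ∧ q x.2.2} ≃ {a // p a} × β × δ where
  toFun x := (⟨x.1.1, x.2.1⟩, x.1.2.1, f ⟨x.1.2.2, x.2.2⟩)
  invFun y := ⟨(y.1, y.2.1, (f.symm y.2.2).1), y.1.2, (f.symm y.2.2).2⟩
  left_inv x := by simp
  right_inv y := by simp

noncomputable def paraPairEquivBlocks {n a b : ℕ} {L M : List ℕ} (hbn : b ≤ n)
    (hM : M.sum = n - b) (hL : L.sum + a = n) (hba : b ≤ a) :
    paraPair n (L ++ [a]) (M ++ [b]) ≃
      {x : GL (Fin (n - b)) (ZMod 2) × GL (Fin b) (ZMod 2) ×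
          Matrix (Fin b) (Fin (n - b)) (ZMod 2) //
        x.1 ∈ paraPair (n - b) (L ++ [a - b]) M ∧
          ∀ i (j : Fin (n - b)), (j : ℕ) < n - a → x.2.2 i j = 0} :=
  (Equiv.subtypeSubtypeEquivSubtype fun hg =>
    IsBlockTriangularPair.upperRight_eq_zero hbn hM (mem_paraPair_iff.mp hg)).symm.trans <|
  Equiv.subtypeEquiv (Matrix.GeneralLinearGroup.lowerBlockTriangularEquiv _) fun g =>
    ⟨fun hg => ⟨IsBlockTriangularPair.submatrix_inl hbn hM hL hba hg,
        IsBlockTriangularPair.lowerLeft_eq_zero hbn hL hba hg⟩,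
      fun h => IsBlockTriangularPair.of_blocks hbn hM hL hba g.2 h.1 h.2⟩

theorem stmt13_general (n a b : ℕ) (L M : List ℕ)
    (hLsum : (L ++ [a]).sum = n) (hMsum : (M ++ [b]).sum = n) (hba : b ≤ a) :
    Nonempty ((paraPair n (L ++ [a]) (M ++ [b])) ≃
      (paraPair (n - b) (L ++ [a - b]) M) × GL (Fin b) (ZMod 2) ×
        Matrix (Fin b) (Fin (a - b)) (ZMod 2)) := by
  simp only [List.sum_append, List.sum_singleton] at hLsum hMsum
  have hbn : b ≤ n := by omega
  exact ⟨(paraPairEquivBlocks hbn (by omega) hLsum hba).trans <|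
    Equiv.subtypeProdProdEquiv (Matrix.initialColsZeroEquiv _ (by omega))⟩

theorem stmt13 (n a b : ℕ) (L M : List ℕ)
    (hL : ∀ x ∈ L ++ [a], 0 < x) (hM : ∀ x ∈ M ++ [b], 0 < x)
    (hLsum : (L ++ [a]).sum = n) (hMsum : (M ++ [b]).sum = n) (hba : b ≤ a) :
    Nonempty ((paraPair n (L ++ [a]) (M ++ [b])) ≃
      (paraPair (n - b) (L ++ [a - b]) M) × GL (Fin b) (ZMod 2) ×
        Matrix (Fin b) (Fin (a - b)) (ZMod 2)) :=
  stmt13_general n a b L M hLsum hMsum hba
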